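/- arXiv:2202.05708 — 3 statements merged into one kernel-verified Lean document; each statement's English description precedes it below -/
import Mathlib

section
/- Let φ ∈ H^1(a,b) with φ(y₀) = 0 for some y₀ ∈ [a,b]. Then there is a constant C (depending only on (a,b)) such that ∫_a^b |φ(y)/(y−y₀)|² dy ≤ C ∫_a^b |φ'(y)|² dy. -/
/-!
Where `φ` vanishes at the left endpoint `c` of `[c, d]`, differentiate
`φ² / (y - c)` to get, for `c < e ≤ d`,
`∫ₑᵈ (φ / (y - c))² ≤ φ(e)² / (e - c) + ∫ₑᵈ 2 (φ / (y - c)) φ'`.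
AM-GM absorbs half of the left side into the cross term, and Cauchy–Schwarz applied to
`φ(e) = ∫_c^e φ'` bounds the boundary term by `∫_c^e φ'²`, so every truncated integral is at
most `4 ∫_c^d φ'²`; letting `e → c` gives the Hardy inequality with constant `4`. Reflecting
`y ↦ -y` handles a zero at the right endpoint, and splitting `[a, b]` at `y₀` gives the theorem.
-/

open MeasureTheory Real Set Filter

theorem IntervalIntegrable.of_sq {f : ℝ → ℝ} {c d : ℝ} (hf : AEStronglyMeasurable f volume)
    (h : IntervalIntegrable (fun y => f y ^ 2) volume c d) : IntervalIntegrable f volume c d := by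
  rw [intervalIntegrable_iff] at h ⊢
  have : IsFiniteMeasure (volume.restrict (uIoc c d)) := by rw [uIoc]; infer_instance
  exact ((memLp_two_iff_integrable_sq hf.restrict).mpr h).integrable one_le_two

theorem sq_intervalIntegral_le_mul {f : ℝ → ℝ} {c e : ℝ} (hce : c ≤ e)
    (hf : IntervalIntegrable f volume c e)
    (hf2 : IntervalIntegrable (fun y => f y ^ 2) volume c e) :
    (∫ y in c..e, f y) ^ 2 ≤ (e - c) * ∫ y in c..e, f y ^ 2 := by
  obtain rfl | hlt := hce.eq_or_lt
  · simp
  -- expand `0 ≤ ∫ (f - m)²` at the mean value `m`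
  set m := (∫ y in c..e, f y) / (e - c)
  have hm : ∫ y in c..e, f y = m * (e - c) := (div_mul_cancel₀ _ (sub_pos.2 hlt).ne').symm
  have hvar : 0 ≤ ∫ y in c..e, (f y ^ 2 - 2 * m * f y + m ^ 2) := by
    refine intervalIntegral.integral_nonneg hce fun y _ => ?_
    nlinarith [sq_nonneg (f y - m)]
  rw [intervalIntegral.integral_add (hf2.sub (hf.const_mul _)) intervalIntegrable_const,
    intervalIntegral.integral_sub hf2 (hf.const_mul _), intervalIntegral.integral_const_mul,
    intervalIntegral.integral_const, hm, smul_eq_mul] at hvar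
  rw [hm]
  nlinarith [sub_pos.2 hlt]

theorem intervalIntegrable_and_integral_le_of_forall_integral_le {f : ℝ → ℝ} {c d M : ℝ}
    (hcd : c < d) (hf0 : ∀ x ∈ Ioc c d, 0 ≤ f x)
    (hfi : ∀ e ∈ Ioc c d, IntervalIntegrable f volume e d)
    (hM : ∀ e ∈ Ioc c d, ∫ x in e..d, f x ≤ M) :
    IntervalIntegrable f volume c d ∧ ∫ x in c..d, f x ≤ M := by
  have hint : IntervalIntegrable f volume c d := by
    rw [intervalIntegrable_iff_integrableOn_Ioc_of_le hcd.le]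
    obtain ⟨u, -, hu, hlim⟩ := exists_seq_strictAnti_tendsto' hcd
    have hu' : ∀ n, u n ∈ Ioc c d := fun n => Ioo_subset_Ioc_self (hu n)
    refine integrableOn_Ioc_of_intervalIntegral_norm_bounded_left (I := M)
      (fun n => (intervalIntegrable_iff_integrableOn_Ioc_of_le (hu' n).2).mp (hfi _ (hu' n)))
      hlim (Eventually.of_forall fun n => ?_)
    rw [← intervalIntegral.integral_of_le (hu' n).2]
    refine le_trans (le_of_eq (intervalIntegral.integral_congr fun x hx => ?_)) (hM _ (hu' n))
    rw [uIcc_of_le (hu' n).2] at hx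
    exact Real.norm_of_nonneg (hf0 x ⟨(hu' n).1.trans_le hx.1, hx.2⟩)
  refine ⟨hint, ?_⟩
  have hcont : ContinuousWithinAt (fun e => ∫ x in e..d, f x) (Icc c d) c := by
    have := intervalIntegral.continuousOn_primitive_interval_left
      ((intervalIntegrable_iff' (μ := volume)).mp hint)
    rw [uIcc_of_le hcd.le] at this
    exact this c (left_mem_Icc.2 hcd.le)
  exact le_of_tendsto (hcont.mono_of_mem_nhdsWithin (Icc_mem_nhdsGT hcd))
    (eventually_of_mem (Ioc_mem_nhdsGT hcd) hM)

section Hardy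

variable {φ dφ : ℝ → ℝ} {c d e : ℝ}

theorem measurable_of_forall_hasDerivAt (hφ : ∀ y, HasDerivAt φ (dφ y) y) : Measurable dφ :=
  funext (fun y => (hφ y).deriv) ▸ measurable_deriv φ

theorem continuousOn_div_sub_of_notMem (hφ : Continuous φ) (hc : c ∉ uIcc e d) :
    ContinuousOn (fun y => φ y / (y - c)) (uIcc e d) :=
  hφ.continuousOn.div (continuousOn_id.sub continuousOn_const) fun _ hy =>
    sub_ne_zero.2 (ne_of_mem_of_not_mem hy hc)

theorem intervalIntegrable_sq_div_sub (hφ : Continuous φ) (hc : c ∉ uIcc e d) :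
    IntervalIntegrable (fun y => (φ y / (y - c)) ^ 2) volume e d :=
  ((continuousOn_div_sub_of_notMem hφ hc).pow 2).intervalIntegrable

theorem intervalIntegrable_mul_div_sub (hφ : ∀ y, HasDerivAt φ (dφ y) y) (hc : c ∉ uIcc e d)
    (hint : IntervalIntegrable (fun y => dφ y ^ 2) volume e d) :
    IntervalIntegrable (fun y => 2 * (φ y / (y - c)) * dφ y) volume e d :=
  (hint.of_sq (measurable_of_forall_hasDerivAt hφ).aestronglyMeasurable).continuousOn_mul
    (continuousOn_const.mul (continuousOn_div_sub_of_notMem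
      (Differentiable.continuous fun y => (hφ y).differentiableAt) hc))

theorem sq_le_mul_intervalIntegral_deriv_sq (hφ : ∀ y, HasDerivAt φ (dφ y) y) (h0 : φ c = 0)
    (hcd : c ≤ d) (hint : IntervalIntegrable (fun y => dφ y ^ 2) volume c d) :
    φ d ^ 2 ≤ (d - c) * ∫ y in c..d, dφ y ^ 2 := by
  have hint₁ := hint.of_sq (measurable_of_forall_hasDerivAt hφ).aestronglyMeasurable
  have hftc : ∫ y in c..d, dφ y = φ d := by
    rw [intervalIntegral.integral_eq_sub_of_hasDerivAt (fun y _ => hφ y) hint₁, h0, sub_zero]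
  simpa [hftc] using sq_intervalIntegral_le_mul hcd hint₁ hint

/-- `(φ² / (y - c))' = 2 (φ / (y - c)) φ' - (φ / (y - c))²`, integrated over `[e, d]`. -/
theorem intervalIntegral_sq_div_sub_eq (hφ : ∀ y, HasDerivAt φ (dφ y) y)
    (hc : c ∉ uIcc e d) (hint : IntervalIntegrable (fun y => dφ y ^ 2) volume e d) :
    ∫ y in e..d, (φ y / (y - c)) ^ 2 =
      φ e ^ 2 / (e - c) - φ d ^ 2 / (d - c) + ∫ y in e..d, 2 * (φ y / (y - c)) * dφ y := by
  have hne : ∀ y ∈ uIcc e d, y - c ≠ 0 := fun y hy =>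
    sub_ne_zero.2 (ne_of_mem_of_not_mem hy hc)
  have hcross := intervalIntegrable_mul_div_sub hφ hc hint
  have hsq := intervalIntegrable_sq_div_sub
    (Differentiable.continuous fun y => (hφ y).differentiableAt) hc
  have hderiv : ∀ y ∈ uIcc e d, HasDerivAt (fun y => φ y ^ 2 / (y - c))
      (2 * (φ y / (y - c)) * dφ y - (φ y / (y - c)) ^ 2) y := by
    intro y hy
    refine (((hφ y).fun_pow 2).div ((hasDerivAt_id' y).sub_const c) (hne y hy)).congr_deriv ?_
    field_simp [hne y hy]
    ring
  have hftc := intervalIntegral.integral_eq_sub_of_hasDerivAt hderiv (hcross.sub hsq)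
  rw [intervalIntegral.integral_sub hcross hsq] at hftc
  linarith

theorem intervalIntegral_sq_div_sub_le (hφ : ∀ y, HasDerivAt φ (dφ y) y)
    (hce : c < e) (hed : e ≤ d) (hint : IntervalIntegrable (fun y => dφ y ^ 2) volume e d) :
    ∫ y in e..d, (φ y / (y - c)) ^ 2 ≤
      2 * (φ e ^ 2 / (e - c)) + 4 * ∫ y in e..d, dφ y ^ 2 := by
  have hc : c ∉ uIcc e d := notMem_uIcc_of_lt hce (hce.trans_le hed)
  have hsq := intervalIntegrable_sq_div_sub
    (Differentiable.continuous fun y => (hφ y).differentiableAt) hc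
  have hamgm : ∫ y in e..d, 2 * (φ y / (y - c)) * dφ y ≤
      ∫ y in e..d, ((φ y / (y - c)) ^ 2 / 2 + 2 * dφ y ^ 2) :=
    intervalIntegral.integral_mono_on hed (intervalIntegrable_mul_div_sub hφ hc hint)
      ((hsq.div_const 2).add (hint.const_mul 2)) fun y _ => by
        nlinarith [sq_nonneg (φ y / (y - c) - 2 * dφ y)]
  rw [intervalIntegral.integral_add (hsq.div_const 2) (hint.const_mul 2),
    intervalIntegral.integral_div, intervalIntegral.integral_const_mul] at hamgm
  have hd : 0 ≤ φ d ^ 2 / (d - c) := div_nonneg (sq_nonneg _) (by linarith)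
  linarith [intervalIntegral_sq_div_sub_eq hφ hc hint]

theorem hardy_of_apply_left_eq_zero (hφ : ∀ y, HasDerivAt φ (dφ y) y) (h0 : φ c = 0)
    (hcd : c ≤ d) (hint : IntervalIntegrable (fun y => dφ y ^ 2) volume c d) :
    IntervalIntegrable (fun y => (φ y / (y - c)) ^ 2) volume c d ∧
      ∫ y in c..d, (φ y / (y - c)) ^ 2 ≤ 4 * ∫ y in c..d, dφ y ^ 2 := by
  obtain rfl | hcd := hcd.eq_or_lt
  · simp
  refine intervalIntegrable_and_integral_le_of_forall_integral_le hcd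
    (fun y _ => sq_nonneg _) (fun e he => ?_) (fun e he => ?_)
  · exact intervalIntegrable_sq_div_sub
      (Differentiable.continuous fun y => (hφ y).differentiableAt)
      (notMem_uIcc_of_lt he.1 (he.1.trans_le he.2))
  have he' := Icc_subset_uIcc (Ioc_subset_Icc_self he)
  have hce := hint.mono_set (uIcc_subset_uIcc_left he')
  have hed := hint.mono_set (uIcc_subset_uIcc_right he')
  have hφe : φ e ^ 2 / (e - c) ≤ ∫ y in c..e, dφ y ^ 2 := by
    rw [div_le_iff₀ (sub_pos.2 he.1), mul_comm]
    exact sq_le_mul_intervalIntegral_deriv_sq hφ h0 he.1.le hce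
  have hnonneg : 0 ≤ ∫ y in c..e, dφ y ^ 2 :=
    intervalIntegral.integral_nonneg he.1.le fun y _ => sq_nonneg _
  rw [← intervalIntegral.integral_add_adjacent_intervals hce hed]
  linarith [intervalIntegral_sq_div_sub_le hφ he.1 he.2 hed]

theorem hardy_of_apply_right_eq_zero (hφ : ∀ y, HasDerivAt φ (dφ y) y) (h0 : φ d = 0)
    (hcd : c ≤ d) (hint : IntervalIntegrable (fun y => dφ y ^ 2) volume c d) :
    IntervalIntegrable (fun y => (φ y / (y - d)) ^ 2) volume c d ∧
      ∫ y in c..d, (φ y / (y - d)) ^ 2 ≤ 4 * ∫ y in c..d, dφ y ^ 2 := by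
  have hψ : ∀ t, HasDerivAt (fun t => φ (-t)) (-dφ (-t)) t := fun t => by
    have := (hφ (-t)).comp t (hasDerivAt_neg t)
    rwa [mul_neg_one] at this
  have hreflect := hardy_of_apply_left_eq_zero hψ (by rwa [neg_neg]) (neg_le_neg hcd)
    (by simpa using ((IntervalIntegrable.iff_comp_neg (f := fun y => dφ y ^ 2)).mp hint).symm)
  have hq : ∀ y, (φ (-y) / (y - -d)) ^ 2 = (φ (-y) / (-y - d)) ^ 2 := fun y => by
    rw [div_pow, div_pow]; ring
  simp only [hq, neg_sq] at hreflect
  rw [intervalIntegral.integral_comp_neg (fun y => (φ y / (y - d)) ^ 2),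
    intervalIntegral.integral_comp_neg (fun y => dφ y ^ 2), neg_neg, neg_neg] at hreflect
  exact ⟨(IntervalIntegrable.iff_comp_neg (f := fun y => (φ y / (y - d)) ^ 2)).mpr
    (by simpa using hreflect.1.symm), hreflect.2⟩

end Hardy

theorem hardy_type_inequality_general (a b : ℝ) :
    ∃ C > 0, ∀ (φ dφ : ℝ → ℝ) (y₀ : ℝ), y₀ ∈ Set.Icc a b →
      (∀ y, HasDerivAt φ (dφ y) y) → φ y₀ = 0 →
      IntervalIntegrable (fun y => dφ y ^ 2) volume a b →
      (∫ y in a..b, (φ y / (y - y₀)) ^ 2) ≤ C * ∫ y in a..b, dφ y ^ 2 := by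
  refine ⟨4, by norm_num, fun φ dφ y₀ hy₀ hφ h0 hint => ?_⟩
  have hy₀' := Icc_subset_uIcc hy₀
  have hintl := hint.mono_set (uIcc_subset_uIcc_left hy₀')
  have hintr := hint.mono_set (uIcc_subset_uIcc_right hy₀')
  obtain ⟨hIl, hl⟩ := hardy_of_apply_right_eq_zero hφ h0 hy₀.1 hintl
  obtain ⟨hIr, hr⟩ := hardy_of_apply_left_eq_zero hφ h0 hy₀.2 hintr
  rw [← intervalIntegral.integral_add_adjacent_intervals hIl hIr,
    ← intervalIntegral.integral_add_adjacent_intervals hintl hintr]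
  linarith

/-- Hardy type inequality: if `φ ∈ H¹(a,b)` vanishes at some `y₀ ∈ [a,b]`, then
`∫_a^b |φ/(y-y₀)|² ≤ C ∫_a^b |φ'|²` with `C` depending only on `(a,b)`. -/
theorem hardy_type_inequality (a b : ℝ) (hab : a < b) :
    ∃ C > 0, ∀ (φ dφ : ℝ → ℝ) (y₀ : ℝ), y₀ ∈ Set.Icc a b →
      (∀ y, HasDerivAt φ (dφ y) y) → φ y₀ = 0 →
      IntervalIntegrable (fun y => dφ y ^ 2) volume a b →
      (∫ y in a..b, (φ y / (y - y₀)) ^ 2) ≤ C * ∫ y in a..b, dφ y ^ 2 :=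
  hardy_type_inequality_general a b
end

section
/- Fix β > 0. Then lim_{c→−1⁻} λ₁(β,c) = λ₁(β,−1), where for c ≤ −1, λ₁(β,c) = inf { ∫_{−1}^1 (|φ'|² − (β/(y−c))|φ|²) dy : φ ∈ H₀¹(−1,1), ‖φ‖_{L²} = 1 }. -/
open MeasureTheory Real Set Filter

/-- The set of values of the Rayleigh–Kuo quadratic form
`∫_{-1}^1 (|φ'|² - (β/(y-c))|φ|²) dy` over `L²`-normalized `φ ∈ H₀¹(-1,1)`. -/
noncomputable def rayleighSet (β c : ℝ) : Set ℝ :=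
  { r | ∃ φ dφ : ℝ → ℝ,
      (∀ y, HasDerivAt φ (dφ y) y) ∧ φ (-1) = 0 ∧ φ 1 = 0 ∧
      IntervalIntegrable (fun y => dφ y ^ 2) volume (-1) 1 ∧
      IntervalIntegrable (fun y => β / (y - c) * φ y ^ 2) volume (-1) 1 ∧
      (∫ y in (-1:ℝ)..1, φ y ^ 2) = 1 ∧
      r = ∫ y in (-1:ℝ)..1, (dφ y ^ 2 - β / (y - c) * φ y ^ 2) }

/-- The principal eigenvalue `λ₁(β,c)` of the Rayleigh–Kuo boundary value problem,
defined variationally as the infimum of the quadratic form. -/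
noncomputable def lambda1 (β c : ℝ) : ℝ := sInf (rayleighSet β c)

/-!
For `c < -1` the potential `β / (y - c)` lies below `β / (y + 1)`, so the quadratic form can only
grow and `λ₁(β, -1) ≤ λ₁(β, c)`. Conversely, for a fixed `φ ∈ H₀¹` the Hardy-type bound
`φ(y)² ≤ (y + 1) ‖φ'‖²` makes `β φ² / (y + 1)` integrable; it dominates `β φ² / (y - c)`, so the
form at `c` tends to the form at `-1` by dominated convergence, and testing with a nearly optimal
`φ` for `c = -1` gives the matching upper bound. The same bound, used near the pole and
`1 / (y + 1) ≤ 1 / δ` away from it, shows that the form at `-1` is bounded below on the unit sphere.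
-/

open Topology

theorem tendsto_csInf_of_exists_le_of_exists_tendsto {ι : Type*} {l : Filter ι}
    {F : ι → Set ℝ} {S : Set ℝ} (hS : S.Nonempty) (hS_bdd : BddBelow S)
    (h_le : ∀ᶠ i in l, ∀ r ∈ F i, ∃ s ∈ S, s ≤ r)
    (h_approx : ∀ s ∈ S, ∃ g : ι → ℝ, (∀ᶠ i in l, g i ∈ F i) ∧ Tendsto g l (𝓝 s)) :
    Tendsto (fun i => sInf (F i)) l (𝓝 (sInf S)) := by
  obtain ⟨s₀, hs₀⟩ := hS
  obtain ⟨g₀, hg₀, -⟩ := h_approx s₀ hs₀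
  have h_lb : ∀ᶠ i in l, ∀ r ∈ F i, sInf S ≤ r := h_le.mono fun i hi r hr =>
    (hi r hr).elim fun s ⟨hs, hsr⟩ => (csInf_le hS_bdd hs).trans hsr
  rw [tendsto_order]
  constructor
  · intro a ha
    filter_upwards [h_lb, hg₀] with i hi hgi
    exact ha.trans_le (le_csInf ⟨_, hgi⟩ hi)
  · intro b hb
    obtain ⟨s, hs, hsb⟩ := exists_lt_of_csInf_lt ⟨s₀, hs₀⟩ hb
    obtain ⟨g, hg, hg_lim⟩ := h_approx s hs
    filter_upwards [hg, h_lb, hg_lim.eventually (gt_mem_nhds hsb)] with i hgi hi hlt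
    exact (csInf_le ⟨_, hi⟩ hgi).trans_lt hlt

theorem sq_intervalIntegral_le {f : ℝ → ℝ} {a b : ℝ} (hab : a ≤ b)
    (hf : IntervalIntegrable f volume a b)
    (hf2 : IntervalIntegrable (fun x => f x ^ 2) volume a b) :
    (∫ x in a..b, f x) ^ 2 ≤ (b - a) * ∫ x in a..b, f x ^ 2 := by
  set I := ∫ x in a..b, f x
  set J := ∫ x in a..b, f x ^ 2
  have hexp : ∫ x in a..b, ((b - a) * f x - I) ^ 2 = (b - a) * ((b - a) * J - I ^ 2) := by
    have : (fun x => ((b - a) * f x - I) ^ 2)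
        = fun x => (b - a) ^ 2 * f x ^ 2 - (2 * (b - a) * I) * f x + I ^ 2 := by
      funext x; ring
    rw [this, intervalIntegral.integral_add ((hf2.const_mul _).sub (hf.const_mul _))
        intervalIntegrable_const, intervalIntegral.integral_sub (hf2.const_mul _) (hf.const_mul _),
      intervalIntegral.integral_const_mul, intervalIntegral.integral_const_mul,
      intervalIntegral.integral_const, smul_eq_mul]
    ring
  rcases hab.eq_or_lt with rfl | hlt
  · simp [I]
  have hnonneg : 0 ≤ ∫ x in a..b, ((b - a) * f x - I) ^ 2 :=
    intervalIntegral.integral_nonneg hab fun x _ => sq_nonneg _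
  rw [hexp] at hnonneg
  nlinarith [sub_pos.2 hlt]

theorem intervalIntegrable_of_sq {f : ℝ → ℝ} {a b : ℝ} (hf : AEStronglyMeasurable f volume)
    (hf2 : IntervalIntegrable (fun x => f x ^ 2) volume a b) :
    IntervalIntegrable f volume a b := by
  refine ((intervalIntegrable_const (c := (1 : ℝ))).add hf2).mono_fun hf.restrict
    (Eventually.of_forall fun x => ?_)
  simp only [Real.norm_eq_abs]
  rw [abs_of_nonneg (by positivity : (0:ℝ) ≤ 1 + f x ^ 2)]
  nlinarith [sq_abs (f x), sq_nonneg (|f x| - 1)]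

section
variable {φ dφ : ℝ → ℝ} {a b β c : ℝ}

theorem sq_le_sub_mul_integral_deriv_sq (hφ : ∀ y, HasDerivAt φ (dφ y) y) (ha : φ a = 0)
    (hD : IntervalIntegrable (fun y => dφ y ^ 2) volume a b) {y : ℝ} (hy : y ∈ Icc a b) :
    φ y ^ 2 ≤ (y - a) * ∫ t in a..b, dφ t ^ 2 := by
  have hdφ_meas : Measurable dφ := by
    rw [show dφ = deriv φ from funext fun y => (hφ y).deriv.symm]
    exact measurable_deriv φ
  have hsub : uIcc a y ⊆ uIcc a b := uIcc_subset_uIcc_left (mem_uIcc_of_le hy.1 hy.2)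
  have hD' := hD.mono_set hsub
  have hdφ := intervalIntegrable_of_sq hdφ_meas.aestronglyMeasurable hD'
  have hφy : φ y = ∫ t in a..y, dφ t := by
    rw [intervalIntegral.integral_eq_sub_of_hasDerivAt (fun t _ => hφ t) hdφ, ha, sub_zero]
  have hmono : ∫ t in a..y, dφ t ^ 2 ≤ ∫ t in a..b, dφ t ^ 2 :=
    intervalIntegral.integral_mono_interval le_rfl hy.1 hy.2
      (Eventually.of_forall fun _ => sq_nonneg _) hD
  rw [hφy]
  exact (sq_intervalIntegral_le hy.1 hdφ hD').trans
    (mul_le_mul_of_nonneg_left hmono (sub_nonneg.2 hy.1))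

theorem intervalIntegrable_div_sub_mul_sq (hφ : ∀ y, HasDerivAt φ (dφ y) y) (ha : φ a = 0)
    (hD : IntervalIntegrable (fun y => dφ y ^ 2) volume a b) (hab : a ≤ b) (hc : c ≤ a) :
    IntervalIntegrable (fun y => β / (y - c) * φ y ^ 2) volume a b := by
  have hφm : Measurable φ :=
    (continuous_iff_continuousAt.2 fun y => (hφ y).continuousAt).measurable
  have hD₀ : 0 ≤ ∫ t in a..b, dφ t ^ 2 :=
    intervalIntegral.integral_nonneg hab fun _ _ => sq_nonneg _
  refine (intervalIntegrable_const (c := |β| * ∫ t in a..b, dφ t ^ 2)).mono_fun'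
    (by fun_prop : Measurable fun y => β / (y - c) * φ y ^ 2).aestronglyMeasurable ?_
  rw [uIoc_of_le hab]
  refine ae_restrict_of_forall_mem measurableSet_Ioc fun y hy => ?_
  have hyc : 0 < y - c := by linarith [hy.1]
  have hHardy := sq_le_sub_mul_integral_deriv_sq hφ ha hD (Ioc_subset_Icc_self hy)
  simp only [norm_mul, norm_div, Real.norm_eq_abs, abs_of_pos hyc, abs_sq]
  rw [div_mul_eq_mul_div, div_le_iff₀ hyc]
  calc |β| * φ y ^ 2 ≤ |β| * ((y - a) * ∫ t in a..b, dφ t ^ 2) := by gcongr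
    _ ≤ |β| * (∫ t in a..b, dφ t ^ 2) * (y - c) := by
      rw [mul_comm (y - a), ← mul_assoc]; gcongr

noncomputable def kuoForm (a b β c : ℝ) (φ dφ : ℝ → ℝ) : ℝ :=
  ∫ y in a..b, (dφ y ^ 2 - β / (y - c) * φ y ^ 2)

theorem kuoForm_le_kuoForm (hφ : ∀ y, HasDerivAt φ (dφ y) y) (ha : φ a = 0)
    (hD : IntervalIntegrable (fun y => dφ y ^ 2) volume a b) (hab : a ≤ b) (hβ : 0 ≤ β)
    (hc : c ≤ a) : kuoForm a b β a φ dφ ≤ kuoForm a b β c φ dφ := by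
  refine intervalIntegral.integral_mono_on hab
    (hD.sub (intervalIntegrable_div_sub_mul_sq hφ ha hD hab le_rfl))
    (hD.sub (intervalIntegrable_div_sub_mul_sq hφ ha hD hab hc)) fun y hy => ?_
  rcases hy.1.eq_or_lt with rfl | hay
  · simp [ha]
  gcongr

theorem tendsto_kuoForm (hφ : ∀ y, HasDerivAt φ (dφ y) y) (ha : φ a = 0)
    (hD : IntervalIntegrable (fun y => dφ y ^ 2) volume a b) (hab : a ≤ b) (hβ : 0 ≤ β) :
    Tendsto (fun c => kuoForm a b β c φ dφ) (𝓝[<] a) (𝓝 (kuoForm a b β a φ dφ)) := by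
  refine intervalIntegral.tendsto_integral_filter_of_dominated_convergence
    (fun y => dφ y ^ 2 + β / (y - a) * φ y ^ 2) ?_ ?_
    (hD.add (intervalIntegrable_div_sub_mul_sq hφ ha hD hab le_rfl)) ?_
  · filter_upwards [self_mem_nhdsWithin] with c hc
    exact (hD.sub (intervalIntegrable_div_sub_mul_sq hφ ha hD hab hc.le)).def'.aestronglyMeasurable
  · filter_upwards [self_mem_nhdsWithin] with c (hc : c < a)
    refine Eventually.of_forall fun y hy => ?_
    rw [uIoc_of_le hab] at hy
    have hpos : 0 ≤ β / (y - c) * φ y ^ 2 := by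
      have : 0 < y - c := by linarith [hy.1]
      positivity
    have hle : β / (y - c) * φ y ^ 2 ≤ β / (y - a) * φ y ^ 2 := by
      have : 0 < y - a := by linarith [hy.1]
      gcongr
    rw [Real.norm_eq_abs, abs_le]
    constructor <;> nlinarith [sq_nonneg (dφ y)]
  · refine Eventually.of_forall fun y hy => ?_
    rw [uIoc_of_le hab] at hy
    have hya : y - a ≠ 0 := by linarith [hy.1]
    refine ContinuousAt.tendsto ?_ |>.mono_left nhdsWithin_le_nhds
    exact continuousAt_const.sub
      ((continuousAt_const.div (continuousAt_const.sub continuousAt_id) hya).mul continuousAt_const)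

theorem integral_div_sub_mul_sq_le (hφ : ∀ y, HasDerivAt φ (dφ y) y) (ha : φ a = 0)
    (hD : IntervalIntegrable (fun y => dφ y ^ 2) volume a b) (hβ : 0 ≤ β) {δ : ℝ} (hδ : 0 < δ)
    (hδb : a + δ ≤ b) :
    ∫ y in a..b, β / (y - a) * φ y ^ 2
      ≤ β * δ * (∫ t in a..b, dφ t ^ 2) + β / δ * ∫ y in a..b, φ y ^ 2 := by
  have hab : a ≤ b := by linarith
  have hφ₂ : IntervalIntegrable (fun y => φ y ^ 2) volume a b :=
    ((continuous_iff_continuousAt.2 fun y => (hφ y).continuousAt).pow 2).intervalIntegrable a b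
  have hpot := intervalIntegrable_div_sub_mul_sq (β := β) hφ ha hD hab le_rfl
  have hδ_mem : a + δ ∈ uIcc a b := mem_uIcc_of_le (by linarith) hδb
  have hsub₁ : uIcc a (a + δ) ⊆ uIcc a b := uIcc_subset_uIcc_left hδ_mem
  have hsub₂ : uIcc (a + δ) b ⊆ uIcc a b := uIcc_subset_uIcc_right hδ_mem
  have hnear : ∫ y in a..a + δ, β / (y - a) * φ y ^ 2 ≤ β * δ * ∫ t in a..b, dφ t ^ 2 := by
    have hD₀ : 0 ≤ ∫ t in a..b, dφ t ^ 2 :=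
      intervalIntegral.integral_nonneg hab fun _ _ => sq_nonneg _
    calc ∫ y in a..a + δ, β / (y - a) * φ y ^ 2
        ≤ ∫ _ in a..a + δ, β * ∫ t in a..b, dφ t ^ 2 := by
          refine intervalIntegral.integral_mono_on (by linarith) (hpot.mono_set hsub₁)
            intervalIntegrable_const fun y hy => ?_
          rcases hy.1.eq_or_lt with rfl | hay
          · simpa [ha] using mul_nonneg hβ hD₀
          have hHardy := sq_le_sub_mul_integral_deriv_sq hφ ha hD ⟨hy.1, hy.2.trans hδb⟩
          calc β / (y - a) * φ y ^ 2 ≤ β / (y - a) * ((y - a) * ∫ t in a..b, dφ t ^ 2) := by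
                have : 0 < y - a := by linarith
                gcongr
            _ = β * ∫ t in a..b, dφ t ^ 2 := by field_simp [(sub_pos.2 hay).ne']
      _ = β * δ * ∫ t in a..b, dφ t ^ 2 := by simp; ring
  have hfar : ∫ y in a + δ..b, β / (y - a) * φ y ^ 2 ≤ β / δ * ∫ y in a..b, φ y ^ 2 := by
    calc ∫ y in a + δ..b, β / (y - a) * φ y ^ 2 ≤ ∫ y in a + δ..b, β / δ * φ y ^ 2 := by
          refine intervalIntegral.integral_mono_on hδb (hpot.mono_set hsub₂)
            ((hφ₂.mono_set hsub₂).const_mul _) fun y hy => ?_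
          have : δ ≤ y - a := by linarith [hy.1]
          gcongr
      _ = β / δ * ∫ y in a + δ..b, φ y ^ 2 := intervalIntegral.integral_const_mul _ _
      _ ≤ β / δ * ∫ y in a..b, φ y ^ 2 := by
          gcongr
          exact intervalIntegral.integral_mono_interval (by linarith) hδb le_rfl
            (Eventually.of_forall fun _ => sq_nonneg _) hφ₂
  rw [← intervalIntegral.integral_add_adjacent_intervals (hpot.mono_set hsub₁)
    (hpot.mono_set hsub₂)]
  linarith

end

section rayleigh
variable {φ dφ : ℝ → ℝ} {β c : ℝ}

theorem kuoForm_mem_rayleighSet (hφ : ∀ y, HasDerivAt φ (dφ y) y) (h₀ : φ (-1) = 0)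
    (h₁ : φ 1 = 0)
    (hD : IntervalIntegrable (fun y => dφ y ^ 2) volume (-1) 1)
    (hnorm : ∫ y in (-1 : ℝ)..1, φ y ^ 2 = 1) (hc : c ≤ -1) :
    kuoForm (-1) 1 β c φ dφ ∈ rayleighSet β c :=
  ⟨φ, dφ, hφ, h₀, h₁, hD, intervalIntegrable_div_sub_mul_sq hφ h₀ hD (by norm_num) hc, hnorm, rfl⟩

theorem rayleighSet_nonempty (hc : c ≤ -1) : (rayleighSet β c).Nonempty := by
  have hφ : ∀ y, HasDerivAt (fun y => cos (π / 2 * y)) (-(sin (π / 2 * y) * (π / 2))) y :=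
    fun y => by simpa using ((hasDerivAt_id y).const_mul (π / 2)).cos
  have hD : IntervalIntegrable (fun y => (-(sin (π / 2 * y) * (π / 2))) ^ 2) volume (-1) 1 :=
    (by fun_prop : Continuous fun y => (-(sin (π / 2 * y) * (π / 2))) ^ 2).intervalIntegrable _ _
  have hnorm : ∫ y in (-1 : ℝ)..1, cos (π / 2 * y) ^ 2 = 1 := by
    rw [intervalIntegral.integral_comp_mul_left (fun x => cos x ^ 2) (by positivity),
      integral_cos_sq]
    simp
  exact ⟨_, kuoForm_mem_rayleighSet hφ (by simp) (by simp) hD hnorm hc⟩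

theorem bddBelow_rayleighSet (hβ : 0 ≤ β) : BddBelow (rayleighSet β (-1)) := by
  refine ⟨-(β * (β + 1)), ?_⟩
  rintro r ⟨φ, dφ, hφ, h₀, -, hD, hpot, hnorm, rfl⟩
  have hδ : (0 : ℝ) < 1 / (β + 1) := by positivity
  have hδ₁ : 1 / (β + 1) ≤ 1 := by rw [div_le_one (by positivity)]; linarith
  have hbound := integral_div_sub_mul_sq_le hφ h₀ hD hβ hδ (by linarith)
  rw [hnorm, mul_one, div_div_eq_mul_div, div_one] at hbound
  have hβδ : β * (1 / (β + 1)) ≤ 1 := by rw [mul_one_div, div_le_one (by positivity)]; linarith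
  have hD₀ : 0 ≤ ∫ t in (-1 : ℝ)..1, dφ t ^ 2 :=
    intervalIntegral.integral_nonneg (by norm_num) fun _ _ => sq_nonneg _
  rw [intervalIntegral.integral_sub hD hpot]
  nlinarith

theorem exists_le_of_mem_rayleighSet (hβ : 0 ≤ β) (hc : c ≤ -1) {r : ℝ}
    (hr : r ∈ rayleighSet β c) : ∃ s ∈ rayleighSet β (-1), s ≤ r := by
  obtain ⟨φ, dφ, hφ, h₀, h₁, hD, -, hnorm, rfl⟩ := hr
  exact ⟨_, kuoForm_mem_rayleighSet hφ h₀ h₁ hD hnorm le_rfl,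
    kuoForm_le_kuoForm hφ h₀ hD (by norm_num) hβ hc⟩

end rayleigh

/-- For fixed `β > 0`, `λ₁(β,c) → λ₁(β,-1)` as `c → -1⁻`. -/
theorem lambda1_tendsto_left (β : ℝ) (hβ : 0 < β) :
    Tendsto (fun c => lambda1 β c) (nhdsWithin (-1) (Set.Iio (-1)))
      (nhds (lambda1 β (-1))) := by
  refine tendsto_csInf_of_exists_le_of_exists_tendsto (rayleighSet_nonempty le_rfl)
    (bddBelow_rayleighSet hβ.le) (eventually_nhdsWithin_of_forall fun c hc =>
      fun _ => exists_le_of_mem_rayleighSet hβ.le hc.le) ?_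
  rintro s ⟨φ, dφ, hφ, h₀, h₁, hD, -, hnorm, rfl⟩
  exact ⟨fun c => kuoForm (-1) 1 β c φ dφ, eventually_nhdsWithin_of_forall fun c hc =>
    kuoForm_mem_rayleighSet hφ h₀ h₁ hD hnorm hc.le,
    tendsto_kuoForm hφ h₀ hD (by norm_num) hβ.le⟩
end

section
/- For any real φ ∈ H₀¹(−1,1) with ‖φ‖_{L²(−1,1)} = 1 and any β ∈ ℝ, the antisymmetric part of the Couette-Rayleigh-Kuo potential satisfies |∫_{2γ}^{1} (β/y)(φ(y)² − φ(−y)²) dy| ≤ (3√2 π |β| / 8) ‖φ'‖²_{L²(−1,1)} for every γ ∈ (0, 1/2). -/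
open MeasureTheory Real Set

/-!
Factor `φ(y)² - φ(-y)² = (φ(y) - φ(-y)) (φ(y) + φ(-y))`. By the fundamental theorem of calculus
and Cauchy–Schwarz, `|φ(y) - φ(-y)| ≤ √(2y) p` and, as `φ(±1) = 0`,
`|φ(y) + φ(-y)| ≤ √(1-y) (q + r)`, where `p, q, r` are the `L²` norms of `φ'` on `(-y, y)`,
`(y, 1)`, `(-1, -y)`. Since `√2 p (q + r) ≤ p² + q² + r² = ‖φ'‖²`, the integrand is at most
`|β| ‖φ'‖² √(1-y) / √y`, whose integral over `(0, 1)` is `π / 2 ≤ 3√2π/8` (an antiderivative is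
`√y √(1-y) + arcsin √y`).
-/

theorem sq_intervalIntegral_le_mul_integral_sq {h : ℝ → ℝ} {a b : ℝ} (hab : a ≤ b)
    (h1 : IntervalIntegrable h volume a b)
    (h2 : IntervalIntegrable (fun x => h x ^ 2) volume a b) :
    (∫ x in a..b, h x) ^ 2 ≤ (b - a) * ∫ x in a..b, h x ^ 2 := by
  rcases hab.eq_or_lt with rfl | hlt
  · simp
  set I := ∫ x in a..b, h x
  set c := I / (b - a)
  have hvar : 0 ≤ ∫ x in a..b, (h x - c) ^ 2 :=
    intervalIntegral.integral_nonneg hab fun x _ => sq_nonneg _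
  have hexpand : ∫ x in a..b, (h x - c) ^ 2
      = (∫ x in a..b, h x ^ 2) - 2 * c * I + c ^ 2 * (b - a) := by
    simp_rw [sub_sq]
    have h1' := (h1.const_mul 2).mul_const c
    rw [intervalIntegral.integral_add (h2.sub h1') intervalIntegrable_const,
      intervalIntegral.integral_sub h2 h1',
      intervalIntegral.integral_mul_const, intervalIntegral.integral_const_mul,
      intervalIntegral.integral_const, smul_eq_mul]
    ring
  have hcI : c * (b - a) = I := div_mul_cancel₀ _ (sub_pos.2 hlt).ne'
  nlinarith [sub_pos.2 hlt]

theorem abs_intervalIntegral_le_sqrt_mul_sqrt {h : ℝ → ℝ} {a b : ℝ} (hab : a ≤ b)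
    (h1 : IntervalIntegrable h volume a b)
    (h2 : IntervalIntegrable (fun x => h x ^ 2) volume a b) :
    |∫ x in a..b, h x| ≤ √(b - a) * √(∫ x in a..b, h x ^ 2) := by
  rw [← sqrt_mul (sub_nonneg.2 hab)]
  exact abs_le_sqrt (sq_intervalIntegral_le_mul_integral_sq hab h1 h2)

theorem IntervalIntegrable.of_sq_s18 {f : ℝ → ℝ} {a b : ℝ}
    (hf : AEStronglyMeasurable f (volume.restrict (uIoc a b)))
    (h2 : IntervalIntegrable (fun x => f x ^ 2) volume a b) :
    IntervalIntegrable f volume a b := by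
  refine IntervalIntegrable.mono_fun' (g := fun x => (1 + f x ^ 2) / 2)
    ((intervalIntegrable_const.add h2).div_const 2) hf (ae_of_all _ fun x => ?_)
  simp only [norm_eq_abs]
  nlinarith [sq_nonneg (|f x| - 1), sq_abs (f x)]

theorem abs_sub_le_sqrt_mul_sqrt_integral_deriv_sq {φ dφ : ℝ → ℝ} {a b : ℝ} (hab : a ≤ b)
    (hderiv : ∀ x, HasDerivAt φ (dφ x) x)
    (hint : IntervalIntegrable (fun x => dφ x ^ 2) volume a b) :
    |φ b - φ a| ≤ √(b - a) * √(∫ x in a..b, dφ x ^ 2) := by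
  have hmeas : Measurable dφ := by
    rw [show dφ = deriv φ from funext fun x => (hderiv x).deriv.symm]
    exact measurable_deriv φ
  have hd : IntervalIntegrable dφ volume a b := .of_sq hmeas.aestronglyMeasurable hint
  rw [← intervalIntegral.integral_eq_sub_of_hasDerivAt (fun x _ => hderiv x) hd]
  exact abs_intervalIntegral_le_sqrt_mul_sqrt hab hd hint

theorem sqrt_two_mul_mul_add_le (p q r : ℝ) : √2 * p * (q + r) ≤ p ^ 2 + q ^ 2 + r ^ 2 := by
  nlinarith [sq_nonneg (√2 * p - (q + r)), sq_nonneg (q - r), sq_sqrt (zero_le_two (α := ℝ))]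

theorem hasDerivAt_sqrt_mul_sqrt_one_sub_add_arcsin_sqrt {y : ℝ} (h0 : 0 < y) (h1 : y < 1) :
    HasDerivAt (fun t => √t * √(1 - t) + arcsin √t) (√(1 - y) / √y) y := by
  have hy : 0 < √y := sqrt_pos.2 h0
  have hy' : 0 < √(1 - y) := sqrt_pos.2 (sub_pos.2 h1)
  have hs := hasDerivAt_sqrt h0.ne'
  have hs1 := (hasDerivAt_sqrt (sub_pos.2 h1).ne').comp y ((hasDerivAt_id y).const_sub 1)
  have ha := (hasDerivAt_arcsin (x := √y) (by linarith) ?_).comp y hs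
  · refine ((hs.mul hs1).add ha).congr_deriv ?_
    rw [sq_sqrt h0.le]
    field_simp
    simp only [Function.comp_apply]
    rw [← sq, sq_sqrt (sub_pos.2 h1).le, sq_sqrt h0.le]
    ring
  · exact ((sqrt_lt' one_pos).2 (by simpa using h1)).ne

theorem intervalIntegrable_sqrt_one_sub_div_sqrt {c d : ℝ} (hc : 0 < c) (hd : 0 < d) :
    IntervalIntegrable (fun y => √(1 - y) / √y) volume c d := by
  refine (ContinuousOn.div (by fun_prop) (by fun_prop) fun y hy => ?_).intervalIntegrable
  exact (sqrt_pos.2 ((lt_min hc hd).trans_le hy.1)).ne'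

theorem integral_sqrt_one_sub_div_sqrt {c : ℝ} (hc0 : 0 < c) (hc1 : c ≤ 1) :
    ∫ y in c..1, √(1 - y) / √y = π / 2 - (√c * √(1 - c) + arcsin √c) := by
  rw [intervalIntegral.integral_eq_sub_of_hasDerivAt_of_le hc1 (by fun_prop)
    (fun y hy => hasDerivAt_sqrt_mul_sqrt_one_sub_add_arcsin_sqrt (hc0.trans hy.1) hy.2)
    (intervalIntegrable_sqrt_one_sub_div_sqrt hc0 one_pos)]
  simp [arcsin_one]

theorem integral_sqrt_one_sub_div_sqrt_le {c : ℝ} (hc0 : 0 < c) (hc1 : c ≤ 1) :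
    ∫ y in c..1, √(1 - y) / √y ≤ π / 2 := by
  rw [integral_sqrt_one_sub_div_sqrt hc0 hc1, sub_le_self_iff]
  have := arcsin_nonneg.2 (sqrt_nonneg c)
  positivity

theorem abs_sq_sub_sq_neg_le {φ dφ : ℝ → ℝ} (hderiv : ∀ x, HasDerivAt φ (dφ x) x)
    (hm1 : φ (-1) = 0) (hp1 : φ 1 = 0)
    (hint : IntervalIntegrable (fun x => dφ x ^ 2) volume (-1) 1)
    {y : ℝ} (hy0 : 0 ≤ y) (hy1 : y ≤ 1) :
    |φ y ^ 2 - φ (-y) ^ 2| ≤ √y * √(1 - y) * ∫ x in (-1:ℝ)..1, dφ x ^ 2 := by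
  have hint' : ∀ s ∈ Icc (-1 : ℝ) 1, ∀ t ∈ Icc (-1 : ℝ) 1,
      IntervalIntegrable (fun x => dφ x ^ 2) volume s t := fun s hs t ht =>
    hint.mono_set (uIcc_subset_uIcc (Icc_subset_uIcc hs) (Icc_subset_uIcc ht))
  have hmy : -y ∈ Icc (-1 : ℝ) 1 := ⟨by linarith, by linarith⟩
  have hy : y ∈ Icc (-1 : ℝ) 1 := ⟨by linarith, hy1⟩
  have hm : (-1 : ℝ) ∈ Icc (-1 : ℝ) 1 := ⟨le_rfl, by norm_num⟩
  have hp : (1 : ℝ) ∈ Icc (-1 : ℝ) 1 := ⟨by norm_num, le_rfl⟩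
  set p := √(∫ x in (-y)..y, dφ x ^ 2)
  set q := √(∫ x in y..1, dφ x ^ 2)
  set r := √(∫ x in (-1:ℝ)..(-y), dφ x ^ 2)
  have hsum : r ^ 2 + p ^ 2 + q ^ 2 = ∫ x in (-1:ℝ)..1, dφ x ^ 2 := by
    have hsq : ∀ s t : ℝ, s ≤ t → √(∫ x in s..t, dφ x ^ 2) ^ 2 = ∫ x in s..t, dφ x ^ 2 :=
      fun s t hst => sq_sqrt (intervalIntegral.integral_nonneg hst fun _ _ => sq_nonneg _)
    rw [hsq _ _ hmy.1, hsq _ _ (by linarith), hsq _ _ hy1,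
      intervalIntegral.integral_add_adjacent_intervals (hint' _ hm _ hmy) (hint' _ hmy _ hy),
      intervalIntegral.integral_add_adjacent_intervals (hint' _ hm _ hy) (hint' _ hy _ hp)]
  have hdiff : |φ y - φ (-y)| ≤ √2 * √y * p := by
    have := abs_sub_le_sqrt_mul_sqrt_integral_deriv_sq (by linarith) hderiv (hint' _ hmy _ hy)
    rwa [show y - -y = 2 * y by ring, sqrt_mul zero_le_two] at this
  have hright : |φ y| ≤ √(1 - y) * q := by
    have := abs_sub_le_sqrt_mul_sqrt_integral_deriv_sq hy1 hderiv (hint' _ hy _ hp)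
    rwa [hp1, zero_sub, abs_neg] at this
  have hleft : |φ (-y)| ≤ √(1 - y) * r := by
    have := abs_sub_le_sqrt_mul_sqrt_integral_deriv_sq (by linarith) hderiv (hint' _ hm _ hmy)
    rwa [hm1, sub_zero, show -y - -1 = 1 - y by ring] at this
  have hsum' : |φ y + φ (-y)| ≤ √(1 - y) * (q + r) := by
    linarith [abs_add_le (φ y) (φ (-y))]
  calc |φ y ^ 2 - φ (-y) ^ 2| = |φ y - φ (-y)| * |φ y + φ (-y)| := by
        rw [← abs_mul]; congr 1; ring
    _ ≤ √2 * √y * p * (√(1 - y) * (q + r)) := by gcongr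
    _ = √y * √(1 - y) * (√2 * p * (q + r)) := by ring
    _ ≤ √y * √(1 - y) * ∫ x in (-1:ℝ)..1, dφ x ^ 2 := by
        rw [← hsum]; gcongr; linarith [sqrt_two_mul_mul_add_le p q r]

theorem abs_div_mul_sq_sub_sq_neg_le {φ dφ : ℝ → ℝ} (hderiv : ∀ x, HasDerivAt φ (dφ x) x)
    (hm1 : φ (-1) = 0) (hp1 : φ 1 = 0)
    (hint : IntervalIntegrable (fun x => dφ x ^ 2) volume (-1) 1)
    (β : ℝ) {y : ℝ} (hy0 : 0 < y) (hy1 : y ≤ 1) :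
    |β / y * (φ y ^ 2 - φ (-y) ^ 2)| ≤
      |β| * (∫ x in (-1:ℝ)..1, dφ x ^ 2) * (√(1 - y) / √y) := by
  have hsy : 0 < √y := sqrt_pos.2 hy0
  calc |β / y * (φ y ^ 2 - φ (-y) ^ 2)| = |β| / (√y * √y) * |φ y ^ 2 - φ (-y) ^ 2| := by
        rw [abs_mul, abs_div, abs_of_pos hy0, mul_self_sqrt hy0.le]
    _ ≤ |β| / (√y * √y) * (√y * √(1 - y) * ∫ x in (-1:ℝ)..1, dφ x ^ 2) := by
        gcongr; exact abs_sq_sub_sq_neg_le hderiv hm1 hp1 hint hy0.le hy1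
    _ = |β| * (∫ x in (-1:ℝ)..1, dφ x ^ 2) * (√(1 - y) / √y) := by
        field_simp

theorem antisymmetric_potential_estimate_general (β γ : ℝ) (hγ : γ ∈ Set.Ioo (0:ℝ) (1/2))
    (φ dφ : ℝ → ℝ)
    (hderiv : ∀ y, HasDerivAt φ (dφ y) y)
    (hm1 : φ (-1) = 0) (hp1 : φ 1 = 0)
    (hint : IntervalIntegrable (fun y => dφ y ^ 2) volume (-1) 1) :
    |∫ y in (2*γ)..1, β / y * (φ y ^ 2 - φ (-y) ^ 2)| ≤
      3 * Real.sqrt 2 * π * |β| / 8 * ∫ y in (-1:ℝ)..1, dφ y ^ 2 := by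
  obtain ⟨hγ0, hγ1⟩ := hγ
  have hc0 : 0 < 2 * γ := by positivity
  have hc1 : 2 * γ ≤ 1 := by linarith
  set D := ∫ y in (-1:ℝ)..1, dφ y ^ 2
  have hD : 0 ≤ D := intervalIntegral.integral_nonneg (by norm_num) fun _ _ => sq_nonneg _
  have hne : ∀ y ∈ uIcc (2 * γ) 1, y ≠ 0 := fun y hy =>
    (hc0.trans_le (uIcc_of_le hc1 ▸ hy).1).ne'
  have hφ : Continuous φ := continuous_iff_continuousAt.2 fun y => (hderiv y).continuousAt
  have hpot : IntervalIntegrable (fun y => |β / y * (φ y ^ 2 - φ (-y) ^ 2)|) volume (2 * γ) 1 :=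
    ContinuousOn.intervalIntegrable (by fun_prop (disch := assumption))
  have hker := intervalIntegrable_sqrt_one_sub_div_sqrt hc0 one_pos
  have hsqrt2 : 4 / 3 ≤ √2 := (le_sqrt (by norm_num) zero_le_two).2 (by norm_num)
  calc |∫ y in (2*γ)..1, β / y * (φ y ^ 2 - φ (-y) ^ 2)|
      ≤ ∫ y in (2*γ)..1, |β / y * (φ y ^ 2 - φ (-y) ^ 2)| :=
        intervalIntegral.abs_integral_le_integral_abs hc1
    _ ≤ ∫ y in (2*γ)..1, |β| * D * (√(1 - y) / √y) :=
        intervalIntegral.integral_mono_on hc1 hpot (hker.const_mul _) fun y hy =>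
          abs_div_mul_sq_sub_sq_neg_le hderiv hm1 hp1 hint β (hc0.trans_le hy.1) hy.2
    _ = |β| * D * ∫ y in (2*γ)..1, √(1 - y) / √y := intervalIntegral.integral_const_mul _ _
    _ ≤ |β| * D * (π / 2) := by gcongr; exact integral_sqrt_one_sub_div_sqrt_le hc0 hc1
    _ ≤ 3 * √2 * π * |β| / 8 * D := by
        nlinarith [mul_nonneg (mul_nonneg (abs_nonneg β) hD) pi_pos.le]

/-- Estimate of the antisymmetric part of the Couette Rayleigh–Kuo potential:
for real `φ ∈ H₀¹(-1,1)` with `‖φ‖_{L²} = 1`, any `β ∈ ℝ` and `γ ∈ (0,1/2)`,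
`|∫_{2γ}^1 (β/y)(φ(y)² - φ(-y)²) dy| ≤ (3√2π|β|/8) ‖φ'‖²_{L²(-1,1)}`. -/
theorem antisymmetric_potential_estimate (β γ : ℝ) (hγ : γ ∈ Set.Ioo (0:ℝ) (1/2))
    (φ dφ : ℝ → ℝ)
    (hderiv : ∀ y, HasDerivAt φ (dφ y) y)
    (hm1 : φ (-1) = 0) (hp1 : φ 1 = 0)
    (hint : IntervalIntegrable (fun y => dφ y ^ 2) volume (-1) 1)
    (hnorm : (∫ y in (-1:ℝ)..1, φ y ^ 2) = 1) :
    |∫ y in (2*γ)..1, β / y * (φ y ^ 2 - φ (-y) ^ 2)| ≤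
      3 * Real.sqrt 2 * π * |β| / 8 * ∫ y in (-1:ℝ)..1, dφ y ^ 2 :=
  antisymmetric_potential_estimate_general β γ hγ φ dφ hderiv hm1 hp1 hint
end
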